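/- Let I ⊆ ℝ[x_{ij} : 1 ≤ i < j ≤ 6] be the ideal generated by: x_{ij}² − x_{ij} for all 1 ≤ i < j ≤ 6; x_{ij}·x_{ik}·x_{jk} for all 1 ≤ i < j < k ≤ 6; and (1 − x_{ij})(1 − x_{ik})(1 − x_{jk}) for all 1 ≤ i < j < k ≤ 6. Then: (i) for every i ∈ {1,…,6} and all distinct j, k, l ∈ {1,…,6}∖{i}, both x_{ij}·x_{ik}·x_{il} ∈ I and (1 − x_{ij})(1 − x_{ik})(1 − x_{il}) ∈ I; and (ii) 1 − Σ_{i=2}^{6} x_{1i} + Σ_{2 ≤ i < j ≤ 6} x_{1i}·x_{1j} ∈ I. -/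
import Mathlib

open MvPolynomial Finset
open scoped Classical

noncomputable section

abbrev PolyRing6 := MvPolynomial (Sym2 (Fin 6)) ℝ

def xe (i j : Fin 6) : PolyRing6 := X s(i, j)

def ramseyIdeal : Ideal PolyRing6 :=
  Ideal.span
    ({q | ∃ i j : Fin 6, i ≠ j ∧ q = xe i j ^ 2 - xe i j} ∪
     {q | ∃ i j k : Fin 6, i ≠ j ∧ i ≠ k ∧ j ≠ k ∧ q = xe i j * xe i k * xe j k} ∪
     {q | ∃ i j k : Fin 6, i ≠ j ∧ i ≠ k ∧ j ≠ k ∧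
        q = (1 - xe i j) * (1 - xe i k) * (1 - xe j k)})

lemma tri_mem (i j k : Fin 6) (hij : i ≠ j) (hik : i ≠ k) (hjk : j ≠ k) :
    xe i j * xe i k * xe j k ∈ ramseyIdeal :=
  Ideal.subset_span (Or.inl (Or.inr ⟨i, j, k, hij, hik, hjk, rfl⟩))

lemma ctri_mem (i j k : Fin 6) (hij : i ≠ j) (hik : i ≠ k) (hjk : j ≠ k) :
    (1 - xe i j) * (1 - xe i k) * (1 - xe j k) ∈ ramseyIdeal :=
  Ideal.subset_span (Or.inr ⟨i, j, k, hij, hik, hjk, rfl⟩)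

lemma claw_mem (i j k l : Fin 6) (hji : j ≠ i) (hki : k ≠ i) (hli : l ≠ i)
    (hjk : j ≠ k) (hjl : j ≠ l) (hkl : k ≠ l) :
    xe i j * xe i k * xe i l ∈ ramseyIdeal := by
  have e : xe i j * xe i k * xe i l =
      xe i l * (xe i j * xe i k * xe j k)
      + xe i k * (1 - xe j k) * (xe i j * xe i l * xe j l)
      + xe i j * (1 - xe j k) * (1 - xe j l) * (xe i k * xe i l * xe k l)
      + xe i j * xe i k * xe i l * ((1 - xe j k) * (1 - xe j l) * (1 - xe k l)) := by ring
  rw [e]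
  exact add_mem (add_mem (add_mem
    (Ideal.mul_mem_left _ _ (tri_mem i j k hji.symm hki.symm hjk))
    (Ideal.mul_mem_left _ _ (tri_mem i j l hji.symm hli.symm hjl)))
    (Ideal.mul_mem_left _ _ (tri_mem i k l hki.symm hli.symm hkl)))
    (Ideal.mul_mem_left _ _ (ctri_mem j k l hjk hjl hkl))

lemma cclaw_mem (i j k l : Fin 6) (hji : j ≠ i) (hki : k ≠ i) (hli : l ≠ i)
    (hjk : j ≠ k) (hjl : j ≠ l) (hkl : k ≠ l) :
    (1 - xe i j) * (1 - xe i k) * (1 - xe i l) ∈ ramseyIdeal := by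
  have e : (1 - xe i j) * (1 - xe i k) * (1 - xe i l) =
      (1 - xe i l) * ((1 - xe i j) * (1 - xe i k) * (1 - xe j k))
      + (1 - xe i k) * xe j k * ((1 - xe i j) * (1 - xe i l) * (1 - xe j l))
      + (1 - xe i j) * xe j k * xe j l * ((1 - xe i k) * (1 - xe i l) * (1 - xe k l))
      + (1 - xe i j) * (1 - xe i k) * (1 - xe i l) * (xe j k * xe j l * xe k l) := by ring
  rw [e]
  exact add_mem (add_mem (add_mem
    (Ideal.mul_mem_left _ _ (ctri_mem i j k hji.symm hki.symm hjk))
    (Ideal.mul_mem_left _ _ (ctri_mem i j l hji.symm hli.symm hjl)))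
    (Ideal.mul_mem_left _ _ (ctri_mem i k l hki.symm hli.symm hkl)))
    (Ideal.mul_mem_left _ _ (tri_mem j k l hjk hjl hkl))

theorem stmt12 :
    (∀ i j k l : Fin 6,
      j ≠ i → k ≠ i → l ≠ i → j ≠ k → j ≠ l → k ≠ l →
      xe i j * xe i k * xe i l ∈ ramseyIdeal ∧
      (1 - xe i j) * (1 - xe i k) * (1 - xe i l) ∈ ramseyIdeal) ∧
    (1 - (∑ i ∈ Finset.univ.filter (fun i : Fin 6 => i ≠ 0), xe 0 i)
       + (∑ p ∈ Finset.univ.filter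
            (fun p : Fin 6 × Fin 6 => p.1 ≠ 0 ∧ p.2 ≠ 0 ∧ p.1 < p.2),
            xe 0 p.1 * xe 0 p.2)) ∈ ramseyIdeal := by
  constructor
  · intro i j k l hji hki hli hjk hjl hkl
    exact ⟨claw_mem i j k l hji hki hli hjk hjl hkl,
           cclaw_mem i j k l hji hki hli hjk hjl hkl⟩
  · have hs1 : (∑ i ∈ Finset.univ.filter (fun i : Fin 6 => i ≠ 0), xe 0 i) =
        xe 0 1 + xe 0 2 + xe 0 3 + xe 0 4 + xe 0 5 := by
      rw [Finset.sum_filter, Fin.sum_univ_six]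
      norm_num [show ((1:Fin 6) = 0) = False by decide, show ((2:Fin 6) = 0) = False by decide,
        show ((3:Fin 6) = 0) = False by decide, show ((4:Fin 6) = 0) = False by decide,
        show ((5:Fin 6) = 0) = False by decide]
    have hs2 : (∑ p ∈ Finset.univ.filter
            (fun p : Fin 6 × Fin 6 => p.1 ≠ 0 ∧ p.2 ≠ 0 ∧ p.1 < p.2),
            xe 0 p.1 * xe 0 p.2) =
        xe 0 1 * xe 0 2 + xe 0 1 * xe 0 3 + xe 0 1 * xe 0 4 + xe 0 1 * xe 0 5
        + xe 0 2 * xe 0 3 + xe 0 2 * xe 0 4 + xe 0 2 * xe 0 5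
        + xe 0 3 * xe 0 4 + xe 0 3 * xe 0 5 + xe 0 4 * xe 0 5 := by
      rw [Finset.sum_filter, Fintype.sum_prod_type]
      simp only [Fin.sum_univ_six]
      norm_num [show ((1:Fin 6) = 0) = False by decide, show ((2:Fin 6) = 0) = False by decide,
        show ((3:Fin 6) = 0) = False by decide, show ((4:Fin 6) = 0) = False by decide,
        show ((5:Fin 6) = 0) = False by decide,
        show ((1:Fin 6) < 2) = True by decide, show ((1:Fin 6) < 3) = True by decide,
        show ((1:Fin 6) < 4) = True by decide, show ((1:Fin 6) < 5) = True by decide,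
        show ((2:Fin 6) < 3) = True by decide, show ((2:Fin 6) < 4) = True by decide,
        show ((2:Fin 6) < 5) = True by decide, show ((3:Fin 6) < 4) = True by decide,
        show ((3:Fin 6) < 5) = True by decide, show ((4:Fin 6) < 5) = True by decide,
        show ((2:Fin 6) < 1) = False by decide, show ((3:Fin 6) < 1) = False by decide,
        show ((4:Fin 6) < 1) = False by decide, show ((5:Fin 6) < 1) = False by decide,
        show ((3:Fin 6) < 2) = False by decide, show ((4:Fin 6) < 2) = False by decide,
        show ((5:Fin 6) < 2) = False by decide, show ((4:Fin 6) < 3) = False by decide,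
        show ((5:Fin 6) < 3) = False by decide, show ((5:Fin 6) < 4) = False by decide,
        show ((1:Fin 6) < 1) = False by decide, show ((2:Fin 6) < 2) = False by decide,
        show ((3:Fin 6) < 3) = False by decide, show ((4:Fin 6) < 4) = False by decide,
        show ((5:Fin 6) < 5) = False by decide]
      ring
    rw [hs1, hs2]
    have e : 1 - (xe 0 1 + xe 0 2 + xe 0 3 + xe 0 4 + xe 0 5)
        + (xe 0 1 * xe 0 2 + xe 0 1 * xe 0 3 + xe 0 1 * xe 0 4 + xe 0 1 * xe 0 5
        + xe 0 2 * xe 0 3 + xe 0 2 * xe 0 4 + xe 0 2 * xe 0 5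
        + xe 0 3 * xe 0 4 + xe 0 3 * xe 0 5 + xe 0 4 * xe 0 5) =
        (xe 0 1 * xe 0 2 * xe 0 3) + (xe 0 1 * xe 0 2 * xe 0 4) + (xe 0 1 * xe 0 2 * xe 0 5)
        + (xe 0 1 * xe 0 3 * xe 0 4) + (xe 0 1 * xe 0 3 * xe 0 5) + (xe 0 1 * xe 0 4 * xe 0 5)
        + (xe 0 2 * xe 0 3 * xe 0 4) + (xe 0 2 * xe 0 3 * xe 0 5) + (xe 0 2 * xe 0 4 * xe 0 5)
        + (xe 0 3 * xe 0 4 * xe 0 5)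
        - (xe 0 4 * (xe 0 1 * xe 0 2 * xe 0 3) + xe 0 5 * (xe 0 1 * xe 0 2 * xe 0 3)
          + xe 0 5 * (xe 0 1 * xe 0 2 * xe 0 4) + xe 0 5 * (xe 0 1 * xe 0 3 * xe 0 4)
          + xe 0 5 * (xe 0 2 * xe 0 3 * xe 0 4))
        + xe 0 4 * xe 0 5 * (xe 0 1 * xe 0 2 * xe 0 3)
        + (1 - xe 0 4) * (1 - xe 0 5) * ((1 - xe 0 1) * (1 - xe 0 2) * (1 - xe 0 3)) := by
      ring
    rw [e]
    have c123 := claw_mem 0 1 2 3 (by decide) (by decide) (by decide) (by decide) (by decide) (by decide)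
    have c124 := claw_mem 0 1 2 4 (by decide) (by decide) (by decide) (by decide) (by decide) (by decide)
    have c125 := claw_mem 0 1 2 5 (by decide) (by decide) (by decide) (by decide) (by decide) (by decide)
    have c134 := claw_mem 0 1 3 4 (by decide) (by decide) (by decide) (by decide) (by decide) (by decide)
    have c135 := claw_mem 0 1 3 5 (by decide) (by decide) (by decide) (by decide) (by decide) (by decide)
    have c145 := claw_mem 0 1 4 5 (by decide) (by decide) (by decide) (by decide) (by decide) (by decide)
    have c234 := claw_mem 0 2 3 4 (by decide) (by decide) (by decide) (by decide) (by decide) (by decide)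
    have c235 := claw_mem 0 2 3 5 (by decide) (by decide) (by decide) (by decide) (by decide) (by decide)
    have c245 := claw_mem 0 2 4 5 (by decide) (by decide) (by decide) (by decide) (by decide) (by decide)
    have c345 := claw_mem 0 3 4 5 (by decide) (by decide) (by decide) (by decide) (by decide) (by decide)
    have cc123 := cclaw_mem 0 1 2 3 (by decide) (by decide) (by decide) (by decide) (by decide) (by decide)
    refine add_mem (add_mem (sub_mem ?_ ?_) ?_) ?_
    · exact add_mem (add_mem (add_mem (add_mem (add_mem (add_mem (add_mem (add_mem (add_mem
        c123 c124) c125) c134) c135) c145) c234) c235) c245) c345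
    · exact add_mem (add_mem (add_mem (add_mem
        (Ideal.mul_mem_left _ _ c123) (Ideal.mul_mem_left _ _ c123))
        (Ideal.mul_mem_left _ _ c124)) (Ideal.mul_mem_left _ _ c134))
        (Ideal.mul_mem_left _ _ c234)
    · exact Ideal.mul_mem_left _ _ c123
    · exact Ideal.mul_mem_left _ _ cc123

end
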